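/- Let q be a real number with 0 < q < 1 and let N ≥ 2 be an integer. Then the polynomials P₁(t) = (1 − q⁴ ([N]_{q⁴}/[N]_{q²}) t) ∏_{l=3}^{N} (1 − q^{2l} t) and P₂(t) = (1 − q^{−2N+4} ([N]_{q⁴}/[N]_{q²}) t) ∏_{l=0}^{N−3} (1 − q^{−2l} t) have no common root; that is, P₁ and P₂ are coprime in ℝ[t]. -/

import Mathlib

/-- The q-integer `[n]_s = 1 + s + ⋯ + s^(n-1)`. -/
def qint (s : ℝ) (n : ℕ) : ℝ := ∑ i ∈ Finset.range n, s ^ i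

/-- The coefficient polynomial appearing in `y* dy`. -/
noncomputable def P₁ (q : ℝ) (N : ℕ) : Polynomial ℝ :=
  (1 - Polynomial.C (q ^ 4 * qint (q ^ 4) N / qint (q ^ 2) N) * Polynomial.X) *
    ∏ l ∈ Finset.range (N - 2), (1 - Polynomial.C (q ^ (2 * (l + 3))) * Polynomial.X)

/-- The coefficient polynomial appearing in `dy y*`. -/
noncomputable def P₂ (q : ℝ) (N : ℕ) : Polynomial ℝ :=
  (1 - Polynomial.C ((q ^ (2 * (N - 2)))⁻¹ * qint (q ^ 4) N / qint (q ^ 2) N) * Polynomial.X) *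
    ∏ l ∈ Finset.range (N - 2), (1 - Polynomial.C ((q ^ (2 * l))⁻¹) * Polynomial.X)

/-!
Both polynomials are products of factors `1 - c t`, and two such factors with distinct `c` are
coprime. The coefficients `c` of `P₁` are `a = q⁴[N]_{q⁴}/[N]_{q²}` and `q^{2l}` for `3 ≤ l ≤ N`,
all `< 1`; those of `P₂` are `b = q^{4-2N}[N]_{q⁴}/[N]_{q²}` and `q^{-2l}` for `0 ≤ l ≤ N-3`, all `≥ 1`
except `b`. So it remains to see `a < b` and `q⁶ < b`; comparing the q-integers termwise gives
`q⁴[N]_{q⁴} < [N]_{q²}` (hence `a < 1`) and `q^{2N+2}[N]_{q²} < [N]_{q⁴}` (which is `q⁶ < b`).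
-/

open Polynomial

theorem isCoprime_one_sub_C_mul_X {K : Type*} [Field K] {a b : K} (h : a ≠ b) :
    IsCoprime (1 - C a * X) (1 - C b * X) := by
  refine ⟨C ((b - a)⁻¹ * b), C (-((b - a)⁻¹ * a)), ?_⟩
  calc C ((b - a)⁻¹ * b) * (1 - C a * X) + C (-((b - a)⁻¹ * a)) * (1 - C b * X)
      = C ((b - a)⁻¹ * (b - a)) := by simp only [map_mul, map_neg, map_sub]; ring
    _ = 1 := by rw [inv_mul_cancel₀ (sub_ne_zero.2 h.symm), map_one]

theorem IsCoprime.eval_ne_zero_of_eval_eq_zero {R : Type*} [CommRing R] [Nontrivial R]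
    {p r : R[X]} (h : IsCoprime p r) {t : R} (hp : p.eval t = 0) : r.eval t ≠ 0 := by
  have := h.map (evalRingHom t)
  rw [coe_evalRingHom, hp, isCoprime_zero_left] at this
  exact this.ne_zero

section qint

variable {s : ℝ} {n : ℕ}

theorem qint_pos (hs : 0 < s) (hn : n ≠ 0) : 0 < qint s n :=
  Finset.sum_pos (fun i _ => pow_pos hs i) (Finset.nonempty_range_iff.2 hn)

theorem sq_mul_qint_sq_lt_qint (hs0 : 0 < s) (hs1 : s < 1) (hn : n ≠ 0) :
    s ^ 2 * qint (s ^ 2) n < qint s n := by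
  rw [qint, qint, Finset.mul_sum]
  refine Finset.sum_lt_sum_of_nonempty (Finset.nonempty_range_iff.2 hn) fun i _ => ?_
  rw [← pow_mul, ← pow_add]
  exact pow_lt_pow_right_of_lt_one₀ hs0 hs1 (by omega)

theorem pow_succ_mul_qint_lt_qint_sq (hs0 : 0 < s) (hs1 : s < 1) (hn : n ≠ 0) :
    s ^ (n + 1) * qint s n < qint (s ^ 2) n := by
  rw [qint, qint, Finset.mul_sum]
  refine Finset.sum_lt_sum_of_nonempty (Finset.nonempty_range_iff.2 hn) fun i hi => ?_
  rw [← pow_mul, ← pow_add]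
  exact pow_lt_pow_right_of_lt_one₀ hs0 hs1 (by rw [Finset.mem_range] at hi; omega)

end qint

theorem coefficient_polynomials_coprime
    (q : ℝ) (hq0 : 0 < q) (hq1 : q < 1) (N : ℕ) (hN : 2 ≤ N)
    :
    (∀ t : ℝ, (P₁ q N).eval t = 0 → (P₂ q N).eval t ≠ 0) ∧ IsCoprime (P₁ q N) (P₂ q N) := by
  have hN0 : N ≠ 0 := by omega
  have hs0 : 0 < q ^ 2 := by positivity
  have hs1 : q ^ 2 < 1 := pow_lt_one₀ hq0.le hq1 two_ne_zero
  have hqint : 0 < qint (q ^ 2) N := qint_pos hs0 hN0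
  have one_le_inv (l : ℕ) : 1 ≤ (q ^ (2 * l))⁻¹ :=
    (one_le_inv₀ (by positivity)).2 (pow_le_one₀ hq0.le hq1.le)
  have pow_le (l : ℕ) : q ^ (2 * (l + 3)) ≤ q ^ 6 := pow_le_pow_of_le_one hq0.le hq1.le (by omega)
  have pow_lt_one (l : ℕ) : q ^ (2 * (l + 3)) < 1 := pow_lt_one₀ hq0.le hq1 (by omega)
  have ha : q ^ 4 * qint (q ^ 4) N / qint (q ^ 2) N < 1 := by
    rw [div_lt_one hqint]
    simpa only [← pow_mul] using sq_mul_qint_sq_lt_qint hs0 hs1 hN0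
  have hb : q ^ 6 < (q ^ (2 * (N - 2)))⁻¹ * qint (q ^ 4) N / qint (q ^ 2) N := by
    rw [lt_div_iff₀ hqint, inv_mul_eq_div, lt_div_iff₀ (by positivity), mul_right_comm, ← pow_add,
      show 6 + 2 * (N - 2) = 2 * (N + 1) by omega, pow_mul, show 4 = 2 * 2 from rfl, pow_mul]
    exact pow_succ_mul_qint_lt_qint_sq hs0 hs1 hN0
  have hab : q ^ 4 * qint (q ^ 4) N / qint (q ^ 2) N
      < (q ^ (2 * (N - 2)))⁻¹ * qint (q ^ 4) N / qint (q ^ 2) N := by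
    gcongr
    · exact qint_pos (by positivity) hN0
    · exact (pow_lt_one₀ hq0.le hq1 four_ne_zero).trans_le (one_le_inv _)
  have hcop : IsCoprime (P₁ q N) (P₂ q N) :=
    .mul_left
      (.mul_right (isCoprime_one_sub_C_mul_X hab.ne)
        (.prod_right fun l _ => isCoprime_one_sub_C_mul_X (ha.trans_le (one_le_inv l)).ne))
      (.prod_left fun l _ => .mul_right
        (isCoprime_one_sub_C_mul_X ((pow_le l).trans_lt hb).ne)
        (.prod_right fun l' _ =>
          isCoprime_one_sub_C_mul_X ((pow_lt_one l).trans_le (one_le_inv l')).ne))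
  exact ⟨fun t => hcop.eval_ne_zero_of_eval_eq_zero, hcop⟩
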